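/- The linear map φ_g: ℋ → T(ℝ^d) determined by φ_g(1) = 1, φ_g([h]_i) = φ_g(h)⊗e_i and φ_g(h₁h₂) = φ_g(h₁)⧢φ_g(h₂) intertwines the coproducts: Δ̄φ_g(h) = (φ_g⊗φ_g)Δh for every h ∈ ℋ, where Δ̄ is the deconcatenation coproduct on T(ℝ^d); consequently φ_g is a morphism of Hopf algebras from (ℋ,·,Δ) to the shuffle Hopf algebra (T(ℝ^d),⧢,Δ̄). -/

import Mathlib

open scoped TensorProduct
open scoped Classical

noncomputable section

/-! ### Labelled rooted trees with unordered branches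

`TreeData A` axiomatizes the set `𝒯` of nonempty rooted trees with finitely many
vertices, each vertex labelled from the alphabet `A`, with unordered branches:
`attach m a = [τ₁ ⋯ τₘ]_a` attaches the forest (multiset of trees) `m` to a new
root labelled `a`, and every tree arises uniquely in this way; `size τ = |τ|` is
the number of vertices.  These conditions pin the structure down uniquely. -/
structure TreeData (A : Type) : Type 1 where
  T : Type
  size : T → ℕ
  size_pos : ∀ τ, 0 < size τ
  attach : (T →₀ ℕ) → A → T
  attach_bijective : Function.Bijective fun p : (T →₀ ℕ) × A => attach p.1 p.2
  size_attach : ∀ m a, size (attach m a) = 1 + m.sum fun τ k => k * size τ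

namespace TreeData

variable {A : Type} (TD : TreeData A)

/-- the single-vertex tree `•_a` -/
def leaf (a : A) : TD.T := TD.attach 0 a

/-- The Connes–Kreimer Hopf algebra `ℋ`: the free commutative polynomial
`ℝ`-algebra on the trees, with linear basis the forests (monomials). -/
abbrev H : Type := MvPolynomial TD.T ℝ

/-- the grade `|τ₁ ⋯ τₙ| = |τ₁| + ⋯ + |τₙ|` of a forest -/
def grade (m : TD.T →₀ ℕ) : ℕ := m.sum fun τ k => k * TD.size τ

/-- the basis monomial of `ℋ` corresponding to a forest -/
def mono (m : TD.T →₀ ℕ) : TD.H := MvPolynomial.monomial m (1 : ℝ)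

/-- the grafting operator `B₊_a`, sending a forest `τ₁ ⋯ τₘ` to `[τ₁ ⋯ τₘ]_a` -/
def Bplus (a : A) : TD.H →ₗ[ℝ] TD.H :=
  (MvPolynomial.basisMonomials TD.T ℝ).constr ℝ fun m =>
    TD.mono (Finsupp.single (TD.attach m a) 1)

/-- `ℋ*`, the full linear dual of `ℋ`: formal series in the dual basis of forests -/
abbrev Dual : Type := (TD.T →₀ ℕ) → ℝ

/-- the pairing `⟨f, h⟩` of `f ∈ ℋ*` with `h ∈ ℋ` -/
def pairL (f : TD.Dual) : TD.H →ₗ[ℝ] ℝ :=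
  (MvPolynomial.basisMonomials TD.T ℝ).constr ℝ f

/-- the dual basis element of `ℋ*` corresponding to a forest -/
def dualForest (m : TD.T →₀ ℕ) : TD.Dual := fun m' => if m' = m then 1 else 0

/-- the counit `1* ∈ ℋ*` -/
def unitD : TD.Dual := fun m => if m = 0 then 1 else 0

/-- the subspace `ℋ_n ⊆ ℋ` spanned by the forests of grade at most `n` -/
def Hn (n : ℕ) : Submodule ℝ TD.H :=
  Submodule.span ℝ {p : TD.H | ∃ m : TD.T →₀ ℕ, TD.grade m ≤ n ∧ p = TD.mono m}

/-- `g` is a character of `ℋ_N` (an element of the truncated group `G_N(ℋ)`):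
`⟨g,1⟩ = 1` and `⟨g, h₁h₂⟩ = ⟨g,h₁⟩⟨g,h₂⟩` whenever `|h₁| + |h₂| ≤ N`. -/
def IsCharN (N : ℕ) (g : TD.Dual) : Prop :=
  g 0 = 1 ∧ (∀ m, ¬TD.grade m ≤ N → g m = 0) ∧
    ∀ m₁ m₂, TD.grade m₁ + TD.grade m₂ ≤ N → g (m₁ + m₂) = g m₁ * g m₂

/-- `h ∈ ℋ*` is a `δ`-primitive: `δh = 1 ⊗ h + h ⊗ 1`, i.e.
`⟨h, xy⟩ = ⟨1, x⟩⟨h, y⟩ + ⟨h, x⟩⟨1, y⟩` for all `x, y ∈ ℋ`. -/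
def IsPrim (f : TD.Dual) : Prop :=
  ∀ p q : TD.H, TD.pairL f (p * q) =
    TD.pairL TD.unitD p * TD.pairL f q + TD.pairL f p * TD.pairL TD.unitD q

/-- `g ∈ ℋ*` is group-like: `δg = g ⊗ g`, i.e. `⟨g, xy⟩ = ⟨g, x⟩⟨g, y⟩`. -/
def IsGroupLike (g : TD.Dual) : Prop :=
  ∀ p q : TD.H, TD.pairL g (p * q) = TD.pairL g p * TD.pairL g q

/-- the linear tree with root labelled `a` and the labels of `l` going up the chain -/
def chainUp : A → List A → TD.T
  | a, [] => TD.leaf a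
  | a, b :: l => TD.attach (Finsupp.single (chainUp b l) 1) a

/-- the inclusion `ι : T(ℝᵈ) → ℋ` on basis words: the word `i₁ ⋯ i_k` is sent to the
(forest consisting of the) linear tree with `i₁` at the top down to `i_k` at the root -/
def iotaForest (w : List A) : TD.T →₀ ℕ :=
  match w.reverse with
  | [] => 0
  | a :: l => Finsupp.single (TD.chainUp a l) 1

/-- `F` is the family of elementary differentials (Butcher coefficients) `f_τ`
associated to the vector fields `f_a`: `f_{[τ₁⋯τₙ]_a} = Dⁿf_a : (f_{τ₁},…,f_{τₙ})`. -/
def IsElemDiff (e : ℕ) (f : A → (Fin e → ℝ) → Fin e → ℝ)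
    (F : TD.T → (Fin e → ℝ) → Fin e → ℝ) : Prop :=
  ∀ (m : TD.T →₀ ℕ) (a : A) (y : Fin e → ℝ) (α : Fin e),
    F (TD.attach m a) y α =
      iteratedFDeriv ℝ m.toMultiset.toList.length (fun x => f a x α) y
        (fun j => F (m.toMultiset.toList.get j) y)

/-- `f_h` on the forest basis: `f_1 = Id`, `f_τ = F τ` on trees, and `f` vanishes on
nontrivial forest products. -/
def forestElem {e : ℕ} (F : TD.T → (Fin e → ℝ) → Fin e → ℝ)
    (m : TD.T →₀ ℕ) (y : Fin e → ℝ) (α : Fin e) : ℝ :=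
  if m = 0 then y α
  else if h : ∃ τ : TD.T, m = Finsupp.single τ 1 then F h.choose y α else 0

end TreeData

/-- The Connes–Kreimer coproduct: the algebra morphism `Δ : ℋ → ℋ ⊗ ℋ` determined
recursively by `Δ1 = 1 ⊗ 1` and
`Δ[τ₁⋯τₘ]_a = [τ₁⋯τₘ]_a ⊗ 1 + Σ (τ₁⁽¹⁾⋯τₘ⁽¹⁾) ⊗ [τ₁⁽²⁾⋯τₘ⁽²⁾]_a`,
i.e. by the cocycle property `Δ ∘ B₊_a = B₊_a ⊗ 1 + (id ⊗ B₊_a) ∘ Δ`. -/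
structure CKCoproduct {A : Type} (TD : TreeData A) where
  Δ : TD.H →ₐ[ℝ] TD.H ⊗[ℝ] TD.H
  Δ_Bplus : ∀ (a : A) (p : TD.H),
    Δ (TD.Bplus a p) = TD.Bplus a p ⊗ₜ[ℝ] 1 + LinearMap.lTensor TD.H (TD.Bplus a) (Δ p)

namespace CKCoproduct

variable {A : Type} {TD : TreeData A} (CK : CKCoproduct TD)

/-- the convolution product on `ℋ*`: `⟨f ⋆ g, h⟩ = ⟨f ⊗ g, Δh⟩` -/
def conv (f g : TD.Dual) : TD.Dual := fun m =>
  LinearMap.mul' ℝ ℝ (TensorProduct.map (TD.pairL f) (TD.pairL g) (CK.Δ (TD.mono m)))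

/-- the convolution product, truncated beyond grade `N` -/
def convN (N : ℕ) (f g : TD.Dual) : TD.Dual := fun m =>
  if TD.grade m ≤ N then CK.conv f g m else 0

/-- truncated convolution powers -/
def convNPow (N : ℕ) (f : TD.Dual) (k : ℕ) : TD.Dual :=
  Nat.rec TD.unitD (fun _ ih => CK.convN N f ih) k

/-- the `⋆`-inverse in the truncated character group `G_N(ℋ)` -/
def starInv (N : ℕ) (g : TD.Dual) : TD.Dual := fun m =>
  ∑ k ∈ Finset.range (N + 1), (-1 : ℝ) ^ k * CK.convNPow N (g - TD.unitD) k m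

/-- the truncated `⋆`-logarithm `log⋆(1+x) = Σ_{k≥1} (−1)^{k−1} x^{⋆k}/k` -/
def logStar (N : ℕ) (g : TD.Dual) : TD.Dual := fun m =>
  ∑ k ∈ Finset.Icc 1 N, ((-1 : ℝ) ^ (k + 1) / k) * CK.convNPow N (g - TD.unitD) k m

/-- untruncated convolution powers -/
def convPow (f : TD.Dual) (k : ℕ) : TD.Dual :=
  Nat.rec TD.unitD (fun _ ih => CK.conv f ih) k

/-- the `⋆`-exponential `exp⋆(h) = Σ_{k≥0} h^{⋆k}/k!` -/
def expStar (f : TD.Dual) : TD.Dual := fun m => ∑' k : ℕ, (Nat.factorial k : ℝ)⁻¹ * CK.convPow f k m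

/-- the increments `𝐗_{st} = 𝐗_s⁻¹ ⋆ 𝐗_t` of a path in `G_N(ℋ)` -/
def inc (N : ℕ) (X : ℝ → TD.Dual) (s t : ℝ) : TD.Dual :=
  CK.convN N (CK.starInv N (X s)) (X t)

/-- a `γ`-Hölder branched rough path on `[0,T]`: a path in `G_N(ℋ)` with
`sup_{s≠t} |⟨𝐗_{st},τ⟩|/|t−s|^{γ|τ|} < ∞` for every forest `τ` of grade `≤ N`. -/
def IsBRP (γ : ℝ) (N : ℕ) (Tf : ℝ) (X : ℝ → TD.Dual) : Prop :=
  (∀ t ∈ Set.Icc (0 : ℝ) Tf, TD.IsCharN N (X t)) ∧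
    ∀ m : TD.T →₀ ℕ, TD.grade m ≤ N →
      ∃ C : ℝ, ∀ s ∈ Set.Icc (0 : ℝ) Tf, ∀ t ∈ Set.Icc (0 : ℝ) Tf,
        |CK.inc N X s t m| ≤ C * |t - s| ^ (γ * (TD.grade m : ℝ))

end CKCoproduct

/-! ### Words: the tensor algebra over a set of letters, with shuffle and
(de)concatenation structure.  An element of `T(V)` (or a functional on it) is
represented by its family of coefficients on basis words. -/
namespace Words

variable {ι : Type}

/-- the empty word `1` (as a dual/coefficient family) -/
def unitW : List ι → ℝ := fun w => if w = [] then 1 else 0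

/-- the basis element corresponding to a single word -/
def deltaW (w : List ι) : List ι → ℝ := fun w' => if w' = w then 1 else 0

/-- the multiset of shuffles (interleavings) of two words -/
def Shuf : List ι → List ι → Multiset (List ι)
  | [], l => {l}
  | a :: as, [] => {a :: as}
  | a :: as, b :: bs =>
      ((Shuf as (b :: bs)).map fun w => a :: w) + ((Shuf (a :: as) bs).map fun w => b :: w)
  termination_by l₁ l₂ => l₁.length + l₂.length

/-- the subword of `w` along a set of positions -/
def subIdx (w : List ι) (S : Finset (Fin w.length)) : List ι :=
  (S.sort (· ≤ ·)).map w.get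

/-- the shuffle product `⧢` (in coefficients) -/
def shufW (x y : List ι → ℝ) : List ι → ℝ := fun w =>
  ∑ S : Finset (Fin w.length), x (subIdx w S) * y (subIdx w Sᶜ)

/-- the concatenation (tensor) product of functionals, truncated beyond `N` letters -/
def concatConvN (N : ℕ) (f g : List ι → ℝ) : List ι → ℝ := fun w =>
  if w.length ≤ N then ∑ k ∈ Finset.range (w.length + 1), f (w.take k) * g (w.drop k) else 0

/-- truncated concatenation powers -/
def concatPow (N : ℕ) (f : List ι → ℝ) (k : ℕ) : List ι → ℝ :=
  Nat.rec unitW (fun _ ih => concatConvN N f ih) k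

/-- the inverse in the truncated group: `g⁻¹ = Σ_k (−1)^k (g − 1)^{⊗k}` -/
def concatInv (N : ℕ) (g : List ι → ℝ) : List ι → ℝ := fun w =>
  ∑ k ∈ Finset.range (N + 1), (-1 : ℝ) ^ k * concatPow N (g - unitW) k w

/-- the truncated tensor exponential -/
def expW (N : ℕ) (x : List ι → ℝ) : List ι → ℝ := fun w =>
  ∑ k ∈ Finset.range (N + 1), (Nat.factorial k : ℝ)⁻¹ * concatPow N x k w

/-- the truncated tensor logarithm -/
def logW (N : ℕ) (x : List ι → ℝ) : List ι → ℝ := fun w =>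
  ∑ k ∈ Finset.Icc 1 N, ((-1 : ℝ) ^ (k + 1) / k) * concatPow N (x - unitW) k w

/-- a shuffle character truncated at `N` letters, with letters restricted by `P`:
an element of the step-`N` free nilpotent group `G^{(N)}` over the letters. -/
def IsShuffleCharN (N : ℕ) (P : ι → Prop) (g : List ι → ℝ) : Prop :=
  g [] = 1 ∧ (∀ w : List ι, ¬(w.length ≤ N ∧ ∀ σ ∈ w, P σ) → g w = 0) ∧
    ∀ u v : List ι, u.length + v.length ≤ N → ((Shuf u v).map g).sum = g u * g v

/-- the increments `𝐗̄_{st} = 𝐗̄_s⁻¹ ⊗ 𝐗̄_t` of a path in `G^{(N)}` -/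
def gInc (N : ℕ) (X : ℝ → List ι → ℝ) (s t : ℝ) : List ι → ℝ :=
  concatConvN N (concatInv N (X s)) (X t)

/-- a `γ`-Hölder geometric rough path on `[0,T]`: a path in the step-`N` free
nilpotent group with `|⟨𝐗̄_{st}, w⟩| ≤ C|t−s|^{γk}` for words of `k ≤ N` letters. -/
def IsGeomRP (γ : ℝ) (N : ℕ) (Tf : ℝ) (P : ι → Prop) (X : ℝ → List ι → ℝ) : Prop :=
  (∀ t ∈ Set.Icc (0 : ℝ) Tf, IsShuffleCharN N P (X t)) ∧
    ∀ w : List ι, w.length ≤ N →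
      ∃ C : ℝ, ∀ s ∈ Set.Icc (0 : ℝ) Tf, ∀ t ∈ Set.Icc (0 : ℝ) Tf,
        |gInc N X s t w| ≤ C * |t - s| ^ (γ * (w.length : ℝ))

/-- the projection of `T(ℬ)` onto `T(ℬ_n)` (kill words with a letter of size `> n`) -/
def projW {A : Type} (TD : TreeData A) (n : ℕ) (x : List TD.T → ℝ) : List TD.T → ℝ :=
  fun w => if ∀ σ ∈ w, TD.size σ ≤ n then x w else 0

/-- the weight of a word of trees -/
def wt {A : Type} (TD : TreeData A) (w : List TD.T) : ℕ := (w.map TD.size).sum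

/-- the commutator bracket with respect to truncated concatenation -/
def bracketW (N : ℕ) (x y : List ι → ℝ) : List ι → ℝ :=
  concatConvN N x y - concatConvN N y x

/-- the free (step-`N`) Lie algebra generated by the letters satisfying `P` -/
def freeLie (N : ℕ) (P : ι → Prop) : Submodule ℝ (List ι → ℝ) :=
  sInf {S : Submodule ℝ (List ι → ℝ) |
    (∀ a : ι, P a → deltaW [a] ∈ S) ∧ ∀ x ∈ S, ∀ y ∈ S, bracketW N x y ∈ S}

/-- the Lie ideal of the free Lie algebra generated by a set `G` -/
def lieIdealGen (N : ℕ) (P : ι → Prop) (G : Set (List ι → ℝ)) : Submodule ℝ (List ι → ℝ) :=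
  sInf {S : Submodule ℝ (List ι → ℝ) |
    G ⊆ ↑S ∧ ∀ x ∈ freeLie N P, ∀ y ∈ S, bracketW N x y ∈ S}

/-- the homogeneous norm `ρ(x) = Σ_k ‖ℓ_k‖^{1/k}` where `log x = Σ ℓ_k` is graded by
the number of tensor factors and `‖·‖` is the Euclidean norm -/
def rhoNorm (N : ℕ) (x : List ι → ℝ) : ℝ :=
  ∑ k ∈ Finset.Icc 1 N,
    Real.sqrt (∑' w : {w : List ι // w.length = k}, logW N x w.1 ^ 2) ^ ((k : ℝ)⁻¹)

end Words

namespace TreeData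

variable {A : Type} (TD : TreeData A)

/-- `φ` is the Hopf algebra morphism `φ_g : ℋ → T(ℝᵈ)` determined by `φ_g(1) = 1`,
`φ_g([h]_a) = φ_g(h) ⊗ e_a` and `φ_g(h₁h₂) = φ_g(h₁) ⧢ φ_g(h₂)`. -/
def IsPhiG (φ : TD.H →ₗ[ℝ] (List A → ℝ)) : Prop :=
  φ (1 : TD.H) = Words.unitW ∧
  (∀ p : TD.H, (Function.support (φ p)).Finite) ∧
  (∀ (a : A) (p : TD.H),
      φ (TD.Bplus a p) = fun w => if w.getLast? = some a then φ p w.dropLast else 0) ∧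
  (∀ p q : TD.H, φ (p * q) = Words.shufW (φ p) (φ q))

/-- the coefficient `⟨h, φ(𝐙)_s⟩` of the composition of a smooth function with a
controlled rough path, for a nonempty forest `h`:
`Σ_{h₁⋯hₙ = h} (1/n!) Dⁿφ(Z_s) : (⟨h₁,𝐙_s⟩, …, ⟨hₙ,𝐙_s⟩)`. -/
def compC {e : ℕ} (φ : (Fin e → ℝ) → Fin e → ℝ) (Zs : Fin e → TD.H)
    (h : TD.T →₀ ℕ) (α : Fin e) : ℝ :=
  ∑' p : Σ n : ℕ, Fin n → (TD.T →₀ ℕ),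
    if (∀ j, p.2 j ≠ 0) ∧ (∑ j, p.2 j) = h ∧ 0 < p.1 then
      (Nat.factorial p.1 : ℝ)⁻¹ *
        iteratedFDeriv ℝ p.1 (fun x => φ x α) (fun β => MvPolynomial.coeff 0 (Zs β))
          (fun j β => MvPolynomial.coeff (p.2 j) (Zs β))
    else 0

/-- the full composition coefficient, `⟨1, φ(𝐙)_s⟩ = φ(Z_s)` on the empty forest -/
def compFull {e : ℕ} (φ : (Fin e → ℝ) → Fin e → ℝ) (Zs : Fin e → TD.H)
    (h : TD.T →₀ ℕ) (α : Fin e) : ℝ :=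
  if h = 0 then φ (fun β => MvPolynomial.coeff 0 (Zs β)) α else TD.compC φ Zs h α

end TreeData

namespace CKCoproduct

variable {A : Type} {TD : TreeData A} (CK : CKCoproduct TD)

/-- `ψ : (ℋ,·,Δ) → (T(ℬ),⧢,Δ̄)` is a graded morphism of Hopf algebras such that for
every tree `τ` with `|τ| ≤ n`, `ψ(τ) = τ + ψ_{n−1}(τ)` (where `ψ_{n−1}` is `ψ`
composed with the projection onto `T(ℬ_{n−1})`). -/
def IsPsi (ψ : TD.H →ₗ[ℝ] (List TD.T → ℝ)) : Prop :=
  ψ (1 : TD.H) = Words.unitW ∧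
  (∀ p : TD.H, (Function.support (ψ p)).Finite) ∧
  (∀ (m : TD.T →₀ ℕ) (w : List TD.T), Words.wt TD w ≠ TD.grade m → ψ (TD.mono m) w = 0) ∧
  (∀ p q : TD.H, ψ (p * q) = Words.shufW (ψ p) (ψ q)) ∧
  (∀ (p : TD.H) (u v : List TD.T),
      ψ p (u ++ v) =
        LinearMap.mul' ℝ ℝ
          (TensorProduct.map
            ((LinearMap.proj (R := ℝ) (φ := fun _ : List TD.T => ℝ) u).comp ψ)
            ((LinearMap.proj (R := ℝ) (φ := fun _ : List TD.T => ℝ) v).comp ψ)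
            (CK.Δ p))) ∧
  (∀ (n : ℕ) (τ : TD.T), TD.size τ ≤ n →
      ∀ w : List TD.T, (∃ σ ∈ w, n ≤ TD.size σ) →
        ψ (TD.mono (Finsupp.single τ 1)) w = if w = [τ] then 1 else 0)

/-- an `𝐗`-controlled rough path with coefficients indexed by forests of grade `≤ M`:
`|⟨h,𝐙_t⟩ − ⟨𝐗_{st} ⋆ h, 𝐙_s⟩| ≤ C |t−s|^{(N−|h|)γ}`. -/
def IsControlled (γ : ℝ) (N M : ℕ) (Tf : ℝ) {e : ℕ}
    (Xinc : ℝ → ℝ → TD.Dual) (Z : ℝ → Fin e → TD.H) : Prop :=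
  (∀ t ∈ Set.Icc (0 : ℝ) Tf, ∀ α, ∀ m : TD.T →₀ ℕ, ¬TD.grade m ≤ M →
      MvPolynomial.coeff m (Z t α) = 0) ∧
    ∀ m : TD.T →₀ ℕ, TD.grade m ≤ M →
      ∃ C : ℝ, ∀ s ∈ Set.Icc (0 : ℝ) Tf, ∀ t ∈ Set.Icc (0 : ℝ) Tf, ∀ α,
        |MvPolynomial.coeff m (Z t α) -
            TD.pairL (CK.conv (Xinc s t) (TD.dualForest m)) (Z s α)| ≤
          C * |t - s| ^ (γ * ((N : ℝ) - (TD.grade m : ℝ)))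

/-- `Y` (together with the controlled rough path `𝐘 = Z` above it) solves the RDE
`dY_t = Σ_a f_a(Y_t) dX^a_t` driven by the rough path with increments `Xinc`, in the
sense of the controlled-rough-path fixed point `𝐘_t − 𝐘_s = ∫_s^t f(𝐘_r)·dX_r`,
the rough integral being defined via the sewing lemma from the local approximations
`Σ_{a} Σ_{h} ⟨h, f_a(𝐘)_s⟩ ⟨𝐗_{st}, [h]_a⟩`. -/
def IsRDESolution (γ : ℝ) (N M : ℕ) (Tf : ℝ) {e : ℕ}
    (Xinc : ℝ → ℝ → TD.Dual) (f : A → (Fin e → ℝ) → Fin e → ℝ)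
    (Y : ℝ → Fin e → ℝ) (Z : ℝ → Fin e → TD.H) : Prop :=
  CK.IsControlled γ N M Tf Xinc Z ∧
  (∀ t ∈ Set.Icc (0 : ℝ) Tf, ∀ α, MvPolynomial.coeff 0 (Z t α) = Y t α) ∧
  (∀ t ∈ Set.Icc (0 : ℝ) Tf, ∀ α, ∀ (h : TD.T →₀ ℕ) (a : A),
      TD.grade (Finsupp.single (TD.attach h a) 1) ≤ M →
      MvPolynomial.coeff (Finsupp.single (TD.attach h a) 1) (Z t α) =
        TD.compFull (f a) (Z t) h α) ∧
  (∀ t ∈ Set.Icc (0 : ℝ) Tf, ∀ α, ∀ m : TD.T →₀ ℕ, m ≠ 0 →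
      (¬∃ τ : TD.T, m = Finsupp.single τ 1) → MvPolynomial.coeff m (Z t α) = 0) ∧
  ∃ r : ℝ → ℝ → Fin e → ℝ,
    (∀ s ∈ Set.Icc (0 : ℝ) Tf, ∀ t ∈ Set.Icc (0 : ℝ) Tf, ∀ α,
      Y t α - Y s α =
        (∑' p : (TD.T →₀ ℕ) × A,
          if TD.grade p.1 ≤ N - 1 then
            TD.compFull (f p.2) (Z s) p.1 α *
              Xinc s t (Finsupp.single (TD.attach p.1 p.2) 1)
          else 0) + r s t α) ∧
    ∀ ε > (0 : ℝ), ∃ δ > (0 : ℝ), ∀ s ∈ Set.Icc (0 : ℝ) Tf, ∀ t ∈ Set.Icc (0 : ℝ) Tf,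
      |t - s| ≤ δ → ∀ α, |r s t α| ≤ ε * |t - s|

/-- the homogeneous norm `∥g∥ = Σ_{τ ∈ 𝒯_N} |⟨log⋆ g, τ⟩|^{1/|τ|}` on `G_N(ℋ)` -/
def hNorm (N : ℕ) (g : TD.Dual) : ℝ :=
  ∑' τ : TD.T,
    if TD.size τ ≤ N then |CK.logStar N g (Finsupp.single τ 1)| ^ ((TD.size τ : ℝ)⁻¹) else 0

end CKCoproduct

/-!
The set of `h ∈ ℋ` on which `φ` intertwines `Δ` with deconcatenation is a subalgebra: a subset
of positions of `u ++ v` is a pair of subsets of positions of `u` and of `v`, so the shuffle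
coefficient of `φ(h₁) ⧢ φ(h₂)` at `u ++ v` is exactly the `u ⊗ v` coefficient of the product
`(φ ⊗ φ)(Δh₁) · (φ ⊗ φ)(Δh₂)`. The subalgebra is closed under every `B₊_a`, by the cocycle
identity `Δ ∘ B₊_a = B₊_a ⊗ 1 + (id ⊗ B₊_a) ∘ Δ` and `φ ∘ B₊_a = (· ⊗ e_a) ∘ φ`. Since every
tree is `B₊_a` of a forest of strictly smaller trees, it contains all trees, hence all of `ℋ`.
-/

theorem Fin.sum_univ_finset_succ {β : Type*} [AddCommMonoid β] (n : ℕ)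
    (f : Finset (Fin (n + 1)) → β) :
    ∑ S, f S = ∑ S : Finset (Fin n), f (S.map (Fin.succEmb n)) +
      ∑ S : Finset (Fin n), f (insert 0 (S.map (Fin.succEmb n))) := by
  rw [← Finset.powerset_univ, Fin.univ_succ, Finset.cons_eq_insert,
    Finset.sum_powerset_insert (by simp), Finset.map_eq_image, Finset.powerset_image,
    Finset.powerset_univ]
  simp only [← Finset.map_eq_image]
  rw [Finset.sum_image fun _ _ _ _ h => Finset.map_injective _ h,
    Finset.sum_image fun _ _ _ _ h => Finset.map_injective _ h]
  rfl

namespace Finset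

theorem compl_map_succEmb (n : ℕ) (S : Finset (Fin n)) :
    (S.map (Fin.succEmb n))ᶜ = insert 0 (Sᶜ.map (Fin.succEmb n)) := by
  ext i
  cases i using Fin.cases <;> simp [Fin.succ_ne_zero]

theorem compl_insert_zero_map_succEmb (n : ℕ) (S : Finset (Fin n)) :
    (insert 0 (S.map (Fin.succEmb n)))ᶜ = Sᶜ.map (Fin.succEmb n) := by
  rw [← compl_compl (Sᶜ.map _), compl_map_succEmb, compl_compl]

theorem sort_map_succEmb (n : ℕ) (S : Finset (Fin n)) :
    (S.map (Fin.succEmb n)).sort (· ≤ ·) = (S.sort (· ≤ ·)).map Fin.succ :=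
  (map_sort _ _ _ _ fun _ _ _ _ => Fin.succ_le_succ_iff.symm).symm

theorem sort_insert_zero_map_succEmb (n : ℕ) (S : Finset (Fin n)) :
    (insert 0 (S.map (Fin.succEmb n))).sort (· ≤ ·) = 0 :: (S.sort (· ≤ ·)).map Fin.succ := by
  rw [sort_insert _ (fun b _ => Fin.zero_le b) (by simp [Fin.succ_ne_zero]),
    sort_map_succEmb]

end Finset

namespace Words

variable {ι : Type}

-- The index sets are ascribed `Fin (w.length + 1)`, the type produced by
-- `Fin.sum_univ_finset_succ`, so that `simp` can rewrite with these lemmas after splitting a sum.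
theorem subIdx_cons_map_succEmb (a : ι) (w : List ι) (S : Finset (Fin w.length)) :
    subIdx (a :: w) (S.map (Fin.succEmb w.length) : Finset (Fin (w.length + 1))) = subIdx w S :=
  (congrArg (List.map (a :: w).get) (Finset.sort_map_succEmb _ S)).trans (List.map_map ..)

theorem subIdx_cons_insert_zero (a : ι) (w : List ι) (S : Finset (Fin w.length)) :
    subIdx (a :: w) (insert 0 (S.map (Fin.succEmb w.length)) : Finset (Fin (w.length + 1))) =
      a :: subIdx w S :=
  (congrArg (List.map (a :: w).get) (Finset.sort_insert_zero_map_succEmb _ S)).trans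
    (congrArg (a :: ·) (List.map_map ..))

theorem subIdx_nil (S : Finset (Fin ([] : List ι).length)) : subIdx [] S = [] := by
  simp [subIdx, S.eq_empty_of_forall_notMem fun i => i.elim0]

theorem shufW_cons (a : ι) (w : List ι) (x y : List ι → ℝ) :
    shufW x y (a :: w) =
      shufW (fun t => x (a :: t)) y w + shufW x (fun t => y (a :: t)) w := by
  refine (Fin.sum_univ_finset_succ w.length
    fun S => x (subIdx (a :: w) S) * y (subIdx (a :: w) Sᶜ)).trans ?_
  simp only [Finset.compl_map_succEmb, Finset.compl_insert_zero_map_succEmb,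
    subIdx_cons_map_succEmb, subIdx_cons_insert_zero]
  exact add_comm _ _

theorem shufW_append (u v : List ι) (x y : List ι → ℝ) :
    shufW x y (u ++ v) =
      ∑ S : Finset (Fin u.length), ∑ T : Finset (Fin v.length),
        x (subIdx u S ++ subIdx v T) * y (subIdx u Sᶜ ++ subIdx v Tᶜ) := by
  induction u generalizing x y with
  | nil => simp [subIdx_nil, shufW]
  | cons a u ih =>
    rw [List.cons_append, shufW_cons, ih, ih, add_comm]
    refine (Fin.sum_univ_finset_succ u.length fun S => ∑ T : Finset (Fin v.length),
      x (subIdx (a :: u) S ++ subIdx v T) * y (subIdx (a :: u) Sᶜ ++ subIdx v Tᶜ)).trans ?_ |>.symm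
    simp only [Finset.compl_map_succEmb, Finset.compl_insert_zero_map_succEmb,
      subIdx_cons_map_succEmb, subIdx_cons_insert_zero, List.cons_append]

section Module

variable {M : Type*} [AddCommMonoid M] [Module ℝ M] (φ : M →ₗ[ℝ] (List ι → ℝ))

def tensorCoeff (u v : List ι) : M ⊗[ℝ] M →ₗ[ℝ] ℝ :=
  LinearMap.mul' ℝ ℝ ∘ₗ
    TensorProduct.map (LinearMap.proj (φ := fun _ : List ι => ℝ) u ∘ₗ φ)
      (LinearMap.proj (φ := fun _ : List ι => ℝ) v ∘ₗ φ)

@[simp]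
theorem tensorCoeff_tmul (u v : List ι) (p q : M) :
    tensorCoeff φ u v (p ⊗ₜ q) = φ p u * φ q v := by
  simp [tensorCoeff]

theorem tensorCoeff_lTensor {B : M →ₗ[ℝ] M} {a : ι}
    (hB : ∀ p, φ (B p) = fun w => if w.getLast? = some a then φ p w.dropLast else 0)
    (u v : List ι) (t : M ⊗[ℝ] M) :
    tensorCoeff φ u v (LinearMap.lTensor M B t) =
      if v.getLast? = some a then tensorCoeff φ u v.dropLast t else 0 := by
  induction t using TensorProduct.induction_on with
  | zero => simp
  | tmul p q => simp [hB, mul_ite]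
  | add t s ht hs => simp only [map_add, ht, hs]; split_ifs <;> simp

end Module

section Algebra

variable {M : Type*} [Semiring M] [Algebra ℝ M] {φ : M →ₗ[ℝ] (List ι → ℝ)}

theorem tensorCoeff_mul (hmul : ∀ p q, φ (p * q) = shufW (φ p) (φ q))
    (u v : List ι) (t s : M ⊗[ℝ] M) :
    tensorCoeff φ u v (t * s) =
      ∑ S : Finset (Fin u.length), ∑ T : Finset (Fin v.length),
        tensorCoeff φ (subIdx u S) (subIdx v T) t *
          tensorCoeff φ (subIdx u Sᶜ) (subIdx v Tᶜ) s := by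
  induction t using TensorProduct.induction_on with
  | zero => simp
  | add t₁ t₂ h₁ h₂ => simp only [add_mul, map_add, h₁, h₂, ← Finset.sum_add_distrib]
  | tmul p q =>
    induction s using TensorProduct.induction_on with
    | zero => simp
    | add s₁ s₂ h₁ h₂ => simp only [mul_add, map_add, h₁, h₂, ← Finset.sum_add_distrib]
    | tmul p' q' =>
      simp only [Algebra.TensorProduct.tmul_mul_tmul, tensorCoeff_tmul, hmul, shufW,
        Finset.sum_mul_sum]
      exact Finset.sum_congr rfl fun _ _ => Finset.sum_congr rfl fun _ _ => by ring

variable (φ) (Δ : M →ₐ[ℝ] M ⊗[ℝ] M)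

def intertwiningSubalgebra (hone : φ 1 = unitW) (hmul : ∀ p q, φ (p * q) = shufW (φ p) (φ q)) :
    Subalgebra ℝ M where
  carrier := {h | ∀ u v, φ h (u ++ v) = tensorCoeff φ u v (Δ h)}
  mul_mem' {p q} (hp : ∀ u v, _) (hq : ∀ u v, _) u v := by
    simp only [hmul, shufW_append, map_mul, tensorCoeff_mul hmul, hp, hq]
  add_mem' hp hq u v := by simp [hp u v, hq u v]
  algebraMap_mem' r u v := by
    rcases u with _ | ⟨a, u⟩ <;> rcases v with _ | ⟨b, v⟩ <;>
      simp [Algebra.algebraMap_eq_smul_one, Algebra.TensorProduct.one_def, hone, unitW]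

theorem map_mem_intertwiningSubalgebra {hone : φ 1 = unitW}
    {hmul : ∀ p q, φ (p * q) = shufW (φ p) (φ q)} {B : M →ₗ[ℝ] M} {a : ι}
    (hΔB : ∀ p, Δ (B p) = B p ⊗ₜ 1 + LinearMap.lTensor M B (Δ p))
    (hφB : ∀ p, φ (B p) = fun w => if w.getLast? = some a then φ p w.dropLast else 0)
    {p : M} (hp : p ∈ intertwiningSubalgebra φ Δ hone hmul) :
    B p ∈ intertwiningSubalgebra φ Δ hone hmul := by
  intro u v
  rw [hΔB, map_add, tensorCoeff_tmul, tensorCoeff_lTensor φ hφB, hone]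
  rcases v with _ | ⟨b, v⟩
  · simp [unitW]
  · have hv : b :: v ≠ [] := List.cons_ne_nil b v
    simp only [hφB, List.getLast?_append_of_ne_nil u hv, List.dropLast_append_of_ne_nil hv,
      unitW, if_neg hv, mul_zero, zero_add]
    split_ifs
    · exact hp u _
    · rfl

end Algebra

end Words

namespace TreeData

variable {A : Type} (TD : TreeData A)

theorem Bplus_mono (a : A) (m : TD.T →₀ ℕ) :
    TD.Bplus a (TD.mono m) = MvPolynomial.X (TD.attach m a) := by
  have hm : TD.mono m = MvPolynomial.basisMonomials TD.T ℝ m := rfl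
  rw [Bplus, hm, Module.Basis.constr_basis]
  rfl

theorem size_lt_size_attach {m : TD.T →₀ ℕ} {σ : TD.T} (hσ : σ ∈ m.support) (a : A) :
    TD.size σ < TD.size (TD.attach m a) := by
  have hσm : TD.size σ ≤ m σ * TD.size σ :=
    Nat.le_mul_of_pos_left _ (Nat.pos_of_ne_zero (Finsupp.mem_support_iff.mp hσ))
  have hm : m σ * TD.size σ ≤ m.sum fun τ k => k * TD.size τ :=
    Finset.single_le_sum (f := fun τ => m τ * TD.size τ) (fun _ _ => Nat.zero_le _) hσ
  rw [TD.size_attach]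
  omega

theorem X_mem_of_Bplus_mem {S : Subalgebra ℝ TD.H} (hS : ∀ a p, p ∈ S → TD.Bplus a p ∈ S)
    (τ : TD.T) : MvPolynomial.X τ ∈ S := by
  induction hn : TD.size τ using Nat.strong_induction_on generalizing τ with
  | _ n ih =>
    obtain ⟨⟨m, a⟩, rfl⟩ := TD.attach_bijective.surjective τ
    have hm : TD.mono m ∈ S := by
      rw [mono, MvPolynomial.monomial_eq, map_one, one_mul]
      exact Subalgebra.prod_mem _ fun σ hσ =>
        pow_mem (ih _ (hn ▸ TD.size_lt_size_attach hσ a) σ rfl) _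
    exact TD.Bplus_mono a m ▸ hS a _ hm

theorem eq_top_of_Bplus_mem {S : Subalgebra ℝ TD.H} (hS : ∀ a p, p ∈ S → TD.Bplus a p ∈ S) :
    S = ⊤ := by
  rw [eq_top_iff, ← MvPolynomial.adjoin_range_X, Algebra.adjoin_le_iff]
  rintro _ ⟨τ, rfl⟩
  exact TD.X_mem_of_Bplus_mem hS τ

end TreeData

theorem stmt_8_general {d : ℕ} (TD : TreeData (Fin d)) (CK : CKCoproduct TD)
    (phi : TD.H →ₗ[ℝ] (List (Fin d) → ℝ)) (hphi : TD.IsPhiG phi) :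
    ∀ (h : TD.H) (u v : List (Fin d)),
      phi h (u ++ v) =
        LinearMap.mul' ℝ ℝ
          (TensorProduct.map
            ((LinearMap.proj (R := ℝ) (φ := fun _ : List (Fin d) => ℝ) u).comp phi)
            ((LinearMap.proj (R := ℝ) (φ := fun _ : List (Fin d) => ℝ) v).comp phi)
            (CK.Δ h)) := by
  obtain ⟨hone, -, hB, hmul⟩ := hphi
  have htop : Words.intertwiningSubalgebra phi CK.Δ hone hmul = ⊤ :=
    TD.eq_top_of_Bplus_mem fun a _ =>
      Words.map_mem_intertwiningSubalgebra phi CK.Δ (CK.Δ_Bplus a) (hB a)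
  exact fun h => Algebra.eq_top_iff.mp htop h

theorem stmt_8 {d : ℕ} (hd : 1 ≤ d) (TD : TreeData (Fin d)) (CK : CKCoproduct TD)
    (phi : TD.H →ₗ[ℝ] (List (Fin d) → ℝ)) (hphi : TD.IsPhiG phi) :
    ∀ (h : TD.H) (u v : List (Fin d)),
      phi h (u ++ v) =
        LinearMap.mul' ℝ ℝ
          (TensorProduct.map
            ((LinearMap.proj (R := ℝ) (φ := fun _ : List (Fin d) => ℝ) u).comp phi)
            ((LinearMap.proj (R := ℝ) (φ := fun _ : List (Fin d) => ℝ) v).comp phi)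
            (CK.Δ h)) :=
  stmt_8_general TD CK phi hphi
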